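/- Let μ be a probability measure on a measurable space X, and let σ : ℝ → ℝ be Lipschitz with constant L > 0 and bounded by B ≥ 0. For each layer l = 1, …, N (N ≥ 1), let f_l : X → ℝ be μ-integrable and let g_l : X → ℝ be measurable with |g_l(x)| ≤ C for μ-almost every x (C > 0). Let w, v ∈ ℝ with |w| ≤ C_w, set K := (B + C·L·C_w)·Σ_{l=1}^{N} ∫ |f_l(x) − g_l(x)| dμ(x), and suppose the accuracy gap obeys the lower bound |Acc_e − Acc*| ≥ c·|w − v| for some constant c ≥ 0 (the accuracy–weight bound obtained in the paper from a second-order Taylor expansion of the loss around the optimum together with a reverse Jensen inequality). If Σ_{l=1}^{N} |Δ(f_l, w) − Δ(g_l, v)| ≥ ε for some ε ≥ K, then |Acc_e − Acc*| ≥ c·(ε − K)/(N·C²·L). In particular, as the total connectivity gap ε − K tends to 0, the guaranteed lower bound on the accuracy gap tends to 0, so maintaining the information flow within ε of the optimal information flow controls the accuracy deviation from the optimal network. -/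

import Mathlib

/-!
Splitting `f σ(w f) − g σ(v g)` as
`(f − g) σ(w f) + g (σ(w f) − σ(w g)) + g (σ(w g) − σ(v g))` and using `|σ| ≤ B`,
the Lipschitz bound and `|g| ≤ C` bounds each layer's connectivity gap by
`(B + C L C_w) ∫ |f − g| + C² L |w − v|`. Summing over the `N` layers,
`ε − K ≤ N C² L |w − v|`, and the accuracy–weight bound `c |w − v| ≤ |Acc_e − Acc*|`
finishes the proof.
-/

open MeasureTheory

/-- The paper's `Δ(f, w) = E[f^(l) f^(l+1)]`, where `f^(l+1) = σ(w f^(l))`. -/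
noncomputable def connectivity {X : Type*} [MeasurableSpace X] (μ : Measure X) (σ : ℝ → ℝ)
    (f : X → ℝ) (w : ℝ) : ℝ :=
  ∫ x, f x * σ (w * f x) ∂μ

section

variable {σ : ℝ → ℝ} {L B C Cw : ℝ}

lemma abs_mul_comp_sub_mul_comp_le (hL : 0 ≤ L) (hLip : ∀ x y, |σ x - σ y| ≤ L * |x - y|)
    (hBd : ∀ x, |σ x| ≤ B) {a b w v : ℝ} (hb : |b| ≤ C) (hw : |w| ≤ Cw) :
    |a * σ (w * a) - b * σ (v * b)| ≤ (B + C * L * Cw) * |a - b| + C ^ 2 * L * |w - v| := by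
  have hC : 0 ≤ C := (abs_nonneg b).trans hb
  have hsplit : a * σ (w * a) - b * σ (v * b) = (a - b) * σ (w * a)
      + b * (σ (w * a) - σ (w * b)) + b * (σ (w * b) - σ (v * b)) := by ring
  have hfirst : |(a - b) * σ (w * a)| ≤ B * |a - b| := by
    rw [abs_mul, mul_comm]
    exact mul_le_mul_of_nonneg_right (hBd _) (abs_nonneg _)
  have hsecond : |b * (σ (w * a) - σ (w * b))| ≤ C * L * Cw * |a - b| := by
    calc |b * (σ (w * a) - σ (w * b))|
        ≤ C * (L * |w * a - w * b|) := by
          rw [abs_mul]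
          exact mul_le_mul hb (hLip _ _) (abs_nonneg _) hC
      _ = C * L * |w| * |a - b| := by rw [← mul_sub, abs_mul]; ring
      _ ≤ C * L * Cw * |a - b| := by gcongr
  have hthird : |b * (σ (w * b) - σ (v * b))| ≤ C ^ 2 * L * |w - v| := by
    calc |b * (σ (w * b) - σ (v * b))|
        ≤ C * (L * |w * b - v * b|) := by
          rw [abs_mul]
          exact mul_le_mul hb (hLip _ _) (abs_nonneg _) hC
      _ = C * L * |w - v| * |b| := by rw [← sub_mul, abs_mul]; ring
      _ ≤ C * L * |w - v| * C := by gcongr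
      _ = C ^ 2 * L * |w - v| := by ring
  rw [hsplit]
  calc _ ≤ |(a - b) * σ (w * a)| + |b * (σ (w * a) - σ (w * b))|
        + |b * (σ (w * b) - σ (v * b))| :=
        (abs_add_le _ _).trans (add_le_add_left (abs_add_le _ _) _)
    _ ≤ _ := by linarith

variable {X : Type*} [MeasurableSpace X] {μ : Measure X} [IsProbabilityMeasure μ]

lemma abs_connectivity_sub_le (hσ : Measurable σ) (hL : 0 ≤ L)
    (hLip : ∀ x y, |σ x - σ y| ≤ L * |x - y|) (hBd : ∀ x, |σ x| ≤ B)
    {f g : X → ℝ} {w v : ℝ} (hf : Integrable f μ) (hgm : AEStronglyMeasurable g μ)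
    (hg : ∀ᵐ x ∂μ, |g x| ≤ C) (hw : |w| ≤ Cw) :
    |connectivity μ σ f w - connectivity μ σ g v|
      ≤ (B + C * L * Cw) * ∫ x, |f x - g x| ∂μ + C ^ 2 * L * |w - v| := by
  have hgi : Integrable g μ := .of_bound hgm C hg
  have hfσ : Integrable (fun x => f x * σ (w * f x)) μ :=
    hf.mul_bdd (hσ.comp_aemeasurable (hf.aemeasurable.const_mul w)).aestronglyMeasurable
      (.of_forall fun _ => hBd _)
  have hgσ : Integrable (fun x => g x * σ (v * g x)) μ :=
    hgi.mul_bdd (hσ.comp_aemeasurable (hgm.aemeasurable.const_mul v)).aestronglyMeasurable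
      (.of_forall fun _ => hBd _)
  have hdiff : Integrable (fun x => |f x - g x|) μ := (hf.sub hgi).abs
  calc |connectivity μ σ f w - connectivity μ σ g v|
      = |∫ x, (f x * σ (w * f x) - g x * σ (v * g x)) ∂μ| := by
        rw [connectivity, connectivity, integral_sub hfσ hgσ]
    _ ≤ ∫ x, |f x * σ (w * f x) - g x * σ (v * g x)| ∂μ := abs_integral_le_integral_abs
    _ ≤ ∫ x, ((B + C * L * Cw) * |f x - g x| + C ^ 2 * L * |w - v|) ∂μ := by
        refine integral_mono_ae (hfσ.sub hgσ).abs
          ((hdiff.const_mul _).add (integrable_const _)) ?_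
        filter_upwards [hg] with x hx
        exact abs_mul_comp_sub_mul_comp_le hL hLip hBd hx hw
    _ = (B + C * L * Cw) * ∫ x, |f x - g x| ∂μ + C ^ 2 * L * |w - v| := by
        rw [integral_add (hdiff.const_mul _) (integrable_const _), integral_const_mul,
          integral_const, probReal_univ, one_smul]

end

theorem accuracy_gap_from_connectivity_gap_general
    {X : Type*} [MeasurableSpace X] (μ : Measure X) [IsProbabilityMeasure μ]
    (σ : ℝ → ℝ) (L B C Cw w v ε c AccE AccStar : ℝ) (N : ℕ)
    (hL : 0 < L) (hC : 0 < C) (hc : 0 ≤ c)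
    (hLip : ∀ x y : ℝ, |σ x - σ y| ≤ L * |x - y|)
    (hBd : ∀ x : ℝ, |σ x| ≤ B)
    (f g : Fin N → X → ℝ)
    (hf : ∀ l, Integrable (f l) μ)
    (hgm : ∀ l, Measurable (g l))
    (hg : ∀ l, ∀ᵐ x ∂μ, |g l x| ≤ C)
    (hw : |w| ≤ Cw)
    (hAcc : c * |w - v| ≤ |AccE - AccStar|)
    (hgap : ε ≤
      ∑ l : Fin N, |(∫ x, f l x * σ (w * f l x) ∂μ) - ∫ x, g l x * σ (v * g l x) ∂μ|) :
    c * (ε - (B + C * L * Cw) * (∑ l : Fin N, ∫ x, |f l x - g l x| ∂μ)) /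
        ((N : ℝ) * C ^ 2 * L) ≤ |AccE - AccStar| := by
  have hσ : LipschitzWith L.toNNReal σ := .of_dist_le_mul fun x y => by
    simpa only [Real.dist_eq, Real.coe_toNNReal L hL.le] using hLip x y
  have hsum : ε ≤ (B + C * L * Cw) * (∑ l : Fin N, ∫ x, |f l x - g l x| ∂μ)
      + N * (C ^ 2 * L * |w - v|) :=
    calc ε ≤ ∑ l : Fin N, |connectivity μ σ (f l) w - connectivity μ σ (g l) v| := hgap
      _ ≤ ∑ l : Fin N, ((B + C * L * Cw) * (∫ x, |f l x - g l x| ∂μ) + C ^ 2 * L * |w - v|) :=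
        Finset.sum_le_sum fun l _ => abs_connectivity_sub_le hσ.continuous.measurable hL.le
          hLip hBd (hf l) (hgm l).aestronglyMeasurable (hg l) hw
      _ = _ := by
        rw [Finset.sum_add_distrib, ← Finset.mul_sum, Finset.sum_const, Finset.card_univ,
          Fintype.card_fin, nsmul_eq_mul]
  refine div_le_of_le_mul₀ (by positivity) (abs_nonneg _) ?_
  calc c * (ε - (B + C * L * Cw) * (∑ l : Fin N, ∫ x, |f l x - g l x| ∂μ))
      ≤ c * (N * (C ^ 2 * L * |w - v|)) := by gcongr; linarith
    _ = c * |w - v| * (N * C ^ 2 * L) := by ring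
    _ ≤ |AccE - AccStar| * (N * C ^ 2 * L) := by gcongr

/-- With `K := (B + C·L·C_w)·Σ_l ∫ |f_l − g_l| dμ`, if the accuracy
gap obeys `|Acc_e − Acc*| ≥ c·|w − v|` for some `c ≥ 0` and the total connectivity
difference `Σ_l |Δ(f_l, w) − Δ(g_l, v)|` is at least `ε ≥ K`, then
`|Acc_e − Acc*| ≥ c·(ε − K)/(N·C²·L)`: maintaining the information flow within `ε`
of the optimal information flow controls the accuracy deviation. -/
theorem accuracy_gap_from_connectivity_gap
    {X : Type*} [MeasurableSpace X] (μ : Measure X) [IsProbabilityMeasure μ]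
    (σ : ℝ → ℝ) (L B C Cw w v ε c AccE AccStar : ℝ) (N : ℕ)
    (hN : 1 ≤ N) (hL : 0 < L) (hB : 0 ≤ B) (hC : 0 < C) (hc : 0 ≤ c)
    (hLip : ∀ x y : ℝ, |σ x - σ y| ≤ L * |x - y|)
    (hBd : ∀ x : ℝ, |σ x| ≤ B)
    (f g : Fin N → X → ℝ)
    (hf : ∀ l, Integrable (f l) μ)
    (hgm : ∀ l, Measurable (g l))
    (hg : ∀ l, ∀ᵐ x ∂μ, |g l x| ≤ C)
    (hw : |w| ≤ Cw)
    (hAcc : c * |w - v| ≤ |AccE - AccStar|)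
    (hεK : (B + C * L * Cw) * (∑ l : Fin N, ∫ x, |f l x - g l x| ∂μ) ≤ ε)
    (hgap : ε ≤
      ∑ l : Fin N, |(∫ x, f l x * σ (w * f l x) ∂μ) - ∫ x, g l x * σ (v * g l x) ∂μ|) :
    c * (ε - (B + C * L * Cw) * (∑ l : Fin N, ∫ x, |f l x - g l x| ∂μ)) /
        ((N : ℝ) * C ^ 2 * L) ≤ |AccE - AccStar| :=
  accuracy_gap_from_connectivity_gap_general μ σ L B C Cw w v ε c AccE AccStar N hL hC hc hLip hBd f
    g hf hgm hg hw hAcc hgap
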